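/- arXiv:2010.13324 — 4 statements merged into one kernel-verified Lean document; each statement's English description precedes it below -/
import Mathlib

section
/- For all integers n ≥ 3 and 0 ≤ k ≤ n−2, one has N(n,k) ≥ (n+k−5/2)·N(n−1,k). -/
/-- Odd double factorial: `ddf m` equals `m!!` for odd `m`, and `ddf 0 = 1`
(so that `ddf (2*n - 5)` with truncated subtraction encodes `(2n-5)!!`
with the convention `(-1)!! = 1`). -/
def ddf : ℕ → ℚ
  | 0 => 1
  | 1 => 1
  | n + 2 => (n + 2) * ddf n

/-- `N n k` is the number of one-component galled networks with `n - 1` leaves whose `k`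
reticulation-node children are labeled `1, …, k`, defined by the initial values
`N(n,0) = (2n-5)!!`, `N(n,1) = (n-2)(2n-5)!!` and the Gunawan--Rathin--Zhang recurrence. -/
def N : ℕ → ℕ → ℚ
  | n, 0 => ddf (2 * n - 5)
  | n, 1 => ((n : ℚ) - 2) * ddf (2 * n - 5)
  | n, k + 2 =>
      ((n : ℚ) + (k + 2) - 3) * N n (k + 1) + ((k : ℚ) + 1) * N n k
        + (1 / 2) * ∑ d ∈ Finset.Icc 1 (k + 1),
            (((k + 1).choose d : ℚ)) * ddf (2 * d - 1) *
              (N (n - d) (k + 1 - d) - N (n - d + 1) (k + 1 - d))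
  termination_by n k => k
  decreasing_by all_goals omega

/-!
The proof is a strong induction on `k` carrying, besides nonnegativity, the horizontal bound
`N(n,k+1) ≥ (n+k-2) N(n,k)` and the vertical bound `N(n,k) ≥ (5/4)(n+k-2) N(n-1,k)` for `n ≥ k+3`.

The correction sum in the recurrence for `N(n,k+2)` is bounded below termwise by
`-C(k+1,d) (2d-1)!! N(n-d+1,k+1-d)`, because `N(·,j)` increases in `n`; by the bounds at level
`k-d`, these majorants at least halve from `d` to `d+1`, so the correction costs at most
`(k+1) N(n,k)`, which the term `(k+1) N(n,k)` of the recurrence absorbs. This gives the horizontal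
bound. For the vertical bounds one subtracts `c` times the recurrence at `n-1` from the recurrence
at `n`: the difference is controlled by the bounds at levels `k` and `k+1` and a polynomial
inequality in `n + k` and `k`. With `c = n+k-1/2` instead of `c = 5(n+k)/4` the same argument also
covers the diagonal `n = k+2` and gives the theorem for `k ≥ 2`; for `k ≤ 1` it follows from the
closed forms of `N(n,0)` and `N(n,1)`.
-/

lemma ddf_pos : ∀ m, 0 < ddf m
  | 0 | 1 => by norm_num [ddf]
  | m + 2 => by rw [ddf]; have := ddf_pos m; positivity

lemma N_zero_pos (n : ℕ) : 0 < N n 0 := by rw [N]; exact ddf_pos _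

lemma ddf_two_mul_add_one {d : ℕ} (hd : 1 ≤ d) :
    ddf (2 * (d + 1) - 1) = (2 * d + 1) * ddf (2 * d - 1) := by
  obtain ⟨e, rfl⟩ := Nat.exists_eq_add_of_le' hd
  rw [show 2 * (e + 1 + 1) - 1 = 2 * e + 1 + 2 by omega, ddf,
    show 2 * (e + 1) - 1 = 2 * e + 1 by omega]
  push_cast; ring

lemma N_zero_eq_mul {n : ℕ} (hn : 4 ≤ n) : N n 0 = (2 * n - 5) * N (n - 1) 0 := by
  obtain ⟨m, rfl⟩ := Nat.exists_eq_add_of_le' hn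
  rw [N, N, show 2 * (m + 4) - 5 = 2 * m + 1 + 2 by omega, ddf,
    show 2 * (m + 4 - 1) - 5 = 2 * m + 1 by omega]
  push_cast; ring

lemma N_one (n : ℕ) : N n 1 = (n - 2) * N n 0 := by rw [N, N]

lemma N_add_two (n k : ℕ) : N n (k + 2) =
    ((n : ℚ) + k - 1) * N n (k + 1) + ((k : ℚ) + 1) * N n k
      + (1 / 2) * ∑ d ∈ Finset.Icc 1 (k + 1),
          ((k + 1).choose d : ℚ) * ddf (2 * d - 1) *
            (N (n - d) (k + 1 - d) - N (n - d + 1) (k + 1 - d)) := by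
  rw [N]; ring

theorem Finset.sum_Icc_le_two_mul_of_halving {R : Type*} [Field R] [LinearOrder R]
    [IsStrictOrderedRing R] {f : ℕ → R} {a b : ℕ} (hab : a ≤ b)
    (hf : ∀ d ∈ Finset.Ico a b, f (d + 1) ≤ f d / 2) (hb : 0 ≤ f b) :
    ∑ d ∈ Finset.Icc a b, f d ≤ 2 * f a := by
  suffices ∑ d ∈ Finset.Icc a b, f d + f b ≤ 2 * f a by linarith
  clear hb
  induction b, hab using Nat.le_induction with
  | base => rw [Finset.Icc_self, Finset.sum_singleton]; linarith
  | succ b hab ih =>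
    rw [Finset.sum_Icc_succ_top (by omega)]
    have := hf b (Finset.mem_Ico.2 ⟨hab, b.lt_succ_self⟩)
    have := ih fun d hd => hf d (Finset.Ico_subset_Ico_right b.le_succ hd)
    linarith

def sumWeight (k d : ℕ) : ℚ := ((k + 1).choose d : ℚ) * ddf (2 * d - 1)

lemma sumWeight_nonneg (k d : ℕ) : 0 ≤ sumWeight k d := by
  have := ddf_pos (2 * d - 1); unfold sumWeight; positivity

lemma sumWeight_one (k : ℕ) : sumWeight k 1 = k + 1 := by simp [sumWeight, ddf]

lemma sumWeight_two (k : ℕ) : sumWeight k 2 = 3 * k * (k + 1) / 2 := by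
  rw [sumWeight, Nat.cast_choose_two, show 2 * 2 - 1 = 1 + 2 from rfl, ddf, ddf]
  push_cast; ring

lemma sumWeight_succ_mul {k d : ℕ} (hd : 1 ≤ d) (hdk : d ≤ k) :
    sumWeight k (d + 1) * (d + 1) = sumWeight k d * (((k : ℚ) + 1 - d) * (2 * d + 1)) := by
  have hchoose : ((k + 1).choose (d + 1) : ℚ) * (d + 1) = (k + 1).choose d * ((k : ℚ) + 1 - d) := by
    have h := congrArg (Nat.cast (R := ℚ)) (Nat.choose_succ_right_eq (k + 1) d)
    push_cast [Nat.cast_sub (show d ≤ k + 1 by omega)] at h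
    linear_combination h
  rw [sumWeight, sumWeight, ddf_two_mul_add_one hd]
  linear_combination (2 * (d : ℚ) + 1) * ddf (2 * d - 1) * hchoose

lemma N_add_two_sub_mul {n k : ℕ} (hn : k + 2 ≤ n) (c : ℚ) :
    N n (k + 2) - c * N (n - 1) (k + 2) =
      (((n : ℚ) + k - 1) * N n (k + 1) - c * ((n : ℚ) + k - 2) * N (n - 1) (k + 1))
        + ((k : ℚ) + 1) * (N n k - c * N (n - 1) k)
        + (1 / 2) * ∑ d ∈ Finset.Icc 1 (k + 1), sumWeight k d *
            ((c + 1) * N (n - d) (k + 1 - d) - N (n - d + 1) (k + 1 - d)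
              - c * N (n - d - 1) (k + 1 - d)) := by
  have hshift : ∑ d ∈ Finset.Icc 1 (k + 1), ((k + 1).choose d : ℚ) * ddf (2 * d - 1) *
        (N (n - 1 - d) (k + 1 - d) - N (n - 1 - d + 1) (k + 1 - d))
      = ∑ d ∈ Finset.Icc 1 (k + 1), sumWeight k d *
        (N (n - d - 1) (k + 1 - d) - N (n - d) (k + 1 - d)) := by
    refine Finset.sum_congr rfl fun d hd => ?_
    rw [Finset.mem_Icc] at hd
    rw [sumWeight, Nat.sub_right_comm, show n - d - 1 + 1 = n - d by omega]
  have hsplit : ∑ d ∈ Finset.Icc 1 (k + 1), sumWeight k d *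
        ((c + 1) * N (n - d) (k + 1 - d) - N (n - d + 1) (k + 1 - d)
          - c * N (n - d - 1) (k + 1 - d))
      = ∑ d ∈ Finset.Icc 1 (k + 1), ((k + 1).choose d : ℚ) * ddf (2 * d - 1) *
          (N (n - d) (k + 1 - d) - N (n - d + 1) (k + 1 - d))
        - c * ∑ d ∈ Finset.Icc 1 (k + 1), sumWeight k d *
          (N (n - d - 1) (k + 1 - d) - N (n - d) (k + 1 - d)) := by
    rw [Finset.mul_sum, ← Finset.sum_sub_distrib]
    exact Finset.sum_congr rfl fun d _ => by rw [sumWeight]; ring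
  rw [N_add_two, N_add_two, hshift, hsplit, Nat.cast_sub (by omega : 1 ≤ n)]
  push_cast
  ring

/-- The final estimate of `vert_add_two_of_bounds`, where `m = n + k` and `A, B, C, D` stand for
`N (n-1) (k+1), N (n-1) k, N (n-1) (k-1), N (n-2) k`. -/
lemma vert_add_two_estimate {k m A B C D : ℚ} (hk : 0 ≤ k) (hm : 2 * k + 5 ≤ m) (hB : 0 ≤ B)
    (hA : (m - 3) * B ≤ A) (hD : 5 * (m - 3) * D ≤ 4 * B) (hC : k * ((m - 4) * C) ≤ k * B) :
    (k + 1) / 2 * (3 / 2 * B + 5 * m / 4 * D) + 3 / 2 * k * (k + 1) * C ≤ 5 / 4 * A := by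
  have hpoly : 0 ≤ 5 * (m - 3) ^ 2 * (m - 4) - (k + 1) * (m - 4) * (5 * m - 9)
      - 6 * k * (k + 1) * (m - 3) := by
    obtain ⟨b, hb, rfl⟩ : ∃ b, 0 ≤ b ∧ m = 2 * k + 5 + b := ⟨m - 2 * k - 5, by linarith, by ring⟩
    ring_nf
    positivity
  have h1 := mul_le_mul_of_nonneg_left hA (show 0 ≤ 5 * (m - 3) * (m - 4) by nlinarith)
  have h2 := mul_le_mul_of_nonneg_left hD
    (mul_nonneg (mul_nonneg (by linarith) (by linarith)) (by linarith) : 0 ≤ (k + 1) * (m - 4) * m)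
  have h3 := mul_le_mul_of_nonneg_left hC
    (mul_nonneg (by linarith) (by linarith) : 0 ≤ 6 * (k + 1) * (m - 3))
  have h4 := mul_nonneg hpoly hB
  have hpos : 0 < 4 * (m - 3) * (m - 4) := by nlinarith
  rw [← mul_le_mul_iff_of_pos_left hpos]
  nlinarith

/-- The final estimate of `vertical_bound_add_two`, in the notation of `vert_add_two_estimate`. -/
lemma vertical_bound_add_two_estimate {k m A B : ℚ} (hk : 0 ≤ k) (hm : 2 * k + 4 ≤ m) (hB : 0 ≤ B)
    (hA : (m - 3) * B ≤ A) : (k + 1) * (m - 1 / 2) * B ≤ (m ^ 2 + 1) / 4 * A := by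
  have hpoly : 0 ≤ (m ^ 2 + 1) * (m - 3) - 4 * (k + 1) * (m - 1 / 2) := by
    obtain ⟨b, hb, rfl⟩ : ∃ b, 0 ≤ b ∧ m = 2 * k + 4 + b := ⟨m - 2 * k - 4, by linarith, by ring⟩
    ring_nf
    positivity
  nlinarith [mul_le_mul_of_nonneg_left hA (by positivity : 0 ≤ (m ^ 2 + 1) / 4),
    mul_nonneg hpoly hB]

/-- `vert` fails only at `N 3 0 = N 2 0`, hence the condition `4 ≤ n`. -/
structure Bounds (K : ℕ) : Prop where
  nonneg : ∀ n, K + 2 ≤ n → 0 ≤ N n K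
  vert : ∀ n, K + 3 ≤ n → 4 ≤ n → 5 * ((n : ℚ) + K - 2) * N (n - 1) K ≤ 4 * N n K
  horiz : ∀ n, K + 3 ≤ n → ((n : ℚ) + K - 2) * N n K ≤ N n (K + 1)

lemma Bounds.N_pred_le {j m : ℕ} (hj : Bounds j) (hm : j + 3 ≤ m) : N (m - 1) j ≤ N m j := by
  rcases Nat.lt_or_ge m 4 with hm4 | hm4
  · obtain ⟨rfl, rfl⟩ : j = 0 ∧ m = 3 := by omega
    norm_num [N, ddf]
  · have hv := hj.vert m hm hm4
    have h0 := hj.nonneg (m - 1) (by omega)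
    have : (4 : ℚ) ≤ m := by exact_mod_cast hm4
    nlinarith

section Step

variable {n k : ℕ}

lemma sumWeight_mul_N_succ_le (ih : ∀ j < k, Bounds j) (hn : k + 4 ≤ n) {d : ℕ} (hd : 1 ≤ d)
    (hdk : d ≤ k) :
    sumWeight k (d + 1) * N (n - (d + 1) + 1) (k + 1 - (d + 1))
      ≤ sumWeight k d * N (n - d + 1) (k + 1 - d) / 2 := by
  obtain ⟨j, rfl⟩ := Nat.exists_eq_add_of_le' hdk
  obtain ⟨p, rfl⟩ := Nat.exists_eq_add_of_le' (show d ≤ n by omega)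
  rw [show p + d - (d + 1) + 1 = p by omega, show j + d + 1 - (d + 1) = j by omega,
    show p + d - d + 1 = p + 1 by omega, show j + d + 1 - d = j + 1 by omega]
  have hj := ih j (by omega)
  have hvert := hj.vert (p + 1) (by omega) (by omega)
  have hhoriz := hj.horiz (p + 1) (by omega)
  have h0 := hj.nonneg p (by omega)
  push_cast at hvert hhoriz
  have hp : (j : ℚ) + 4 ≤ p := by exact_mod_cast (show j + 4 ≤ p by omega)
  have hM : 2 * (j : ℚ) + 3 ≤ p + j - 1 := by linarith
  have hsq : 5 * ((p : ℚ) + j - 1) ^ 2 * N p j ≤ 4 * N (p + 1) (j + 1) := by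
    nlinarith
  have hM2 : 16 * ((j : ℚ) + 1) ≤ 5 * ((p : ℚ) + j - 1) ^ 2 := by nlinarith
  have hcoef : 8 * ((j : ℚ) + 1) * (2 * d + 1) ≤ 5 * (d + 1) * ((p : ℚ) + j - 1) ^ 2 := by
    nlinarith [mul_le_mul_of_nonneg_right hM2 (show (0 : ℚ) ≤ d + 1 by positivity)]
  have key : 2 * ((j : ℚ) + 1) * (2 * d + 1) * N p j ≤ (d + 1) * N (p + 1) (j + 1) := by
    nlinarith [mul_le_mul_of_nonneg_right hcoef h0]
  have hw := sumWeight_succ_mul (k := j + d) hd (by omega)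
  have hw0 := sumWeight_nonneg (j + d) d
  push_cast at hw
  rw [← mul_le_mul_iff_of_pos_right (show (0 : ℚ) < 2 * (d + 1) by positivity)]
  nlinarith [mul_le_mul_of_nonneg_left key hw0]

lemma sum_sumWeight_mul_N_le (ih : ∀ j < k, Bounds j) (hn : k + 4 ≤ n) {a : ℕ} (ha : 1 ≤ a)
    (hak : a ≤ k + 1) :
    ∑ d ∈ Finset.Icc a (k + 1), sumWeight k d * N (n - d + 1) (k + 1 - d)
      ≤ 2 * (sumWeight k a * N (n - a + 1) (k + 1 - a)) := by
  refine Finset.sum_Icc_le_two_mul_of_halving hak (fun d hd => ?_) ?_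
  · rw [Finset.mem_Ico] at hd
    exact sumWeight_mul_N_succ_le ih hn (by omega) (by omega)
  · rw [Nat.sub_self]
    exact mul_nonneg (sumWeight_nonneg _ _) (N_zero_pos _).le

lemma sum_Icc_two_sumWeight_mul_N_le (ih : ∀ j < k, Bounds j) (hn : k + 4 ≤ n) :
    ∑ d ∈ Finset.Icc 2 (k + 1), sumWeight k d * N (n - d + 1) (k + 1 - d)
      ≤ 3 * k * (k + 1) * N (n - 1) (k - 1) := by
  rcases Nat.eq_zero_or_pos k with rfl | hk
  · simp
  · have := sum_sumWeight_mul_N_le ih hn (a := 2) (by norm_num) (by omega)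
    rw [sumWeight_two, show n - 2 + 1 = n - 1 by omega, show k + 1 - 2 = k - 1 by omega] at this
    linarith

lemma neg_sum_le_sum_sumWeight_mul (ih : ∀ j ≤ k, Bounds j) (hn : k + 4 ≤ n) {a : ℕ} (ha : 1 ≤ a)
    {c : ℚ} (hc : 0 ≤ c) :
    -∑ d ∈ Finset.Icc a (k + 1), sumWeight k d * N (n - d + 1) (k + 1 - d)
      ≤ ∑ d ∈ Finset.Icc a (k + 1), sumWeight k d *
          ((c + 1) * N (n - d) (k + 1 - d) - N (n - d + 1) (k + 1 - d)
            - c * N (n - d - 1) (k + 1 - d)) := by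
  rw [← Finset.sum_neg_distrib]
  refine Finset.sum_le_sum fun d hd => ?_
  rw [Finset.mem_Icc] at hd
  have hj := ih (k + 1 - d) (by omega)
  have hmono := hj.N_pred_le (m := n - d) (by omega)
  have h0 := hj.nonneg (n - d) (by omega)
  have hw := sumWeight_nonneg k d
  have : 0 ≤ (c + 1) * N (n - d) (k + 1 - d) - c * N (n - d - 1) (k + 1 - d) := by nlinarith
  nlinarith [mul_nonneg hw this]

lemma horiz_succ_of_bounds (ih : ∀ j ≤ k, Bounds j) (hn : k + 4 ≤ n) :
    ((n : ℚ) + k - 1) * N n (k + 1) ≤ N n (k + 2) := by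
  have hrec := N_add_two_sub_mul (n := n) (k := k) (by omega) 0
  have hlow := neg_sum_le_sum_sumWeight_mul ih hn le_rfl le_rfl
  have hup := sum_sumWeight_mul_N_le (fun j hj => ih j hj.le) hn le_rfl (by omega)
  rw [sumWeight_one, Nat.sub_add_cancel (by omega), Nat.add_sub_cancel] at hup
  simp only [zero_mul, sub_zero, zero_add, one_mul] at hrec hlow
  linarith

lemma vert_add_two_of_bounds (ih : ∀ j ≤ k + 1, Bounds j) (hn : k + 5 ≤ n) :
    5 * ((n : ℚ) + k) * N (n - 1) (k + 2) ≤ 4 * N n (k + 2) := by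
  have hrec := N_add_two_sub_mul (n := n) (k := k) (by omega) (5 * ((n : ℚ) + k) / 4)
  rw [← Finset.add_sum_Ioc_eq_sum_Icc (by omega), ← Finset.Icc_add_one_left_eq_Ioc,
    sumWeight_one, Nat.add_sub_cancel, Nat.sub_add_cancel (by omega)] at hrec
  have hlow := neg_sum_le_sum_sumWeight_mul (fun j hj => ih j (by omega)) (by omega : k + 4 ≤ n)
    (by norm_num : 1 ≤ 2) (show 0 ≤ 5 * ((n : ℚ) + k) / 4 by positivity)
  have hup := sum_Icc_two_sumWeight_mul_N_le (fun j hj => ih j (by omega)) (by omega : k + 4 ≤ n)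
  have hn1 : ((n - 1 : ℕ) : ℚ) = n - 1 := by rw [Nat.cast_sub (by omega)]; simp
  have hF := (ih (k + 1) (by omega)).vert n (by omega) (by omega)
  have hE := (ih k (by omega)).vert n (by omega) (by omega)
  have hD := (ih k (by omega)).vert (n - 1) (by omega) (by omega)
  have hA := (ih k (by omega)).horiz (n - 1) (by omega)
  have hC : (k : ℚ) * (((n : ℚ) + k - 4) * N (n - 1) (k - 1)) ≤ k * N (n - 1) k := by
    rcases Nat.eq_zero_or_pos k with rfl | hk
    · simp
    · have := (ih (k - 1) (by omega)).horiz (n - 1) (by omega)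
      rw [Nat.sub_add_cancel hk, hn1, Nat.cast_sub hk, Nat.cast_one] at this
      refine mul_le_mul_of_nonneg_left (by linarith) (by positivity)
  rw [hn1, show n - 1 - 1 = n - 2 by omega] at hD
  rw [hn1] at hA
  rw [show n - 1 - 1 = n - 2 by omega, show 1 + 1 = 2 from rfl] at hrec
  push_cast at hF
  have hB0 := (ih k (by omega)).nonneg (n - 1) (by omega)
  have hnk : (k : ℚ) + 5 ≤ n := by exact_mod_cast hn
  have hk0 : (0 : ℚ) ≤ k := by positivity
  have hT1 := mul_le_mul_of_nonneg_left hF (show (0 : ℚ) ≤ n + k - 1 by linarith)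
  have hmid := mul_le_mul_of_nonneg_left hE (show (0 : ℚ) ≤ k + 1 by linarith)
  have hcomb := vert_add_two_estimate (A := N (n - 1) (k + 1)) (D := N (n - 2) k) hk0
    (show 2 * (k : ℚ) + 5 ≤ n + k by linarith) hB0 (by linarith) (by linarith) hC
  linarith

lemma vertical_bound_add_two (ih : ∀ j ≤ k + 1, Bounds j) (hn : k + 4 ≤ n) :
    ((n : ℚ) + k - 1 / 2) * N (n - 1) (k + 2) ≤ N n (k + 2) := by
  have hnk : (k : ℚ) + 4 ≤ n := by exact_mod_cast hn
  have hrec := N_add_two_sub_mul (n := n) (k := k) (by omega) ((n : ℚ) + k - 1 / 2)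
  have hlow := neg_sum_le_sum_sumWeight_mul (fun j hj => ih j (by omega)) hn le_rfl
    (show 0 ≤ (n : ℚ) + k - 1 / 2 by linarith)
  have hup := sum_sumWeight_mul_N_le (fun j hj => ih j (by omega)) hn le_rfl (by omega)
  rw [sumWeight_one, Nat.sub_add_cancel (by omega), Nat.add_sub_cancel] at hup
  have hF := (ih (k + 1) (by omega)).vert n (by omega) (by omega)
  have hA := (ih k (by omega)).horiz (n - 1) (by omega)
  have hB0 := (ih k (by omega)).nonneg (n - 1) (by omega)
  rw [Nat.cast_sub (by omega : 1 ≤ n), Nat.cast_one] at hA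
  push_cast at hF
  have hT1 := mul_le_mul_of_nonneg_left hF (show (0 : ℚ) ≤ n + k - 1 by linarith)
  have hcomb := vertical_bound_add_two_estimate (A := N (n - 1) (k + 1))
    (by positivity : (0 : ℚ) ≤ k) (show 2 * (k : ℚ) + 4 ≤ n + k by linarith) hB0 (by linarith)
  linarith

lemma bounds_add_two (ih : ∀ j ≤ k + 1, Bounds j) : Bounds (k + 2) where
  nonneg n hn := by
    have hnk : (k : ℚ) + 4 ≤ n := by exact_mod_cast hn
    refine (mul_nonneg ?_ ((ih (k + 1) le_rfl).nonneg n (by omega))).trans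
      ((ih (k + 1) le_rfl).horiz n (by omega))
    push_cast; linarith
  vert n hn _ := by
    have := vert_add_two_of_bounds ih (n := n) (by omega)
    push_cast; linarith
  horiz n hn := by
    have := horiz_succ_of_bounds (k := k + 1) ih (n := n) (by omega)
    push_cast at this ⊢; linarith

end Step

lemma bounds_zero : Bounds 0 where
  nonneg n _ := (N_zero_pos n).le
  vert n _ hn := by
    rw [N_zero_eq_mul hn]
    have := (N_zero_pos (n - 1)).le
    have : (4 : ℚ) ≤ n := by exact_mod_cast hn
    push_cast
    nlinarith
  horiz n _ := by rw [N_one]; simp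

lemma bounds_one : Bounds 1 where
  nonneg n hn := by
    rw [N_one]
    have : (3 : ℚ) ≤ n := by exact_mod_cast hn
    exact mul_nonneg (by linarith) (N_zero_pos n).le
  vert n _ hn := by
    rw [N_one, N_one, N_zero_eq_mul hn, Nat.cast_sub (by omega : 1 ≤ n)]
    have : (4 : ℚ) ≤ n := by exact_mod_cast hn
    have hcoef : 5 * ((n : ℚ) - 1) * (n - 3) ≤ 4 * ((n - 2) * (2 * n - 5)) := by nlinarith
    push_cast
    nlinarith [mul_le_mul_of_nonneg_right hcoef (N_zero_pos (n - 1)).le]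
  horiz n hn := by
    have := horiz_succ_of_bounds (k := 0) (fun j hj => Nat.le_zero.mp hj ▸ bounds_zero) (n := n)
      (by omega)
    push_cast at this ⊢; linarith

theorem bounds (K : ℕ) : Bounds K := by
  induction K using Nat.strong_induction_on with
  | _ K ih =>
    match K, ih with
    | 0, _ => exact bounds_zero
    | 1, _ => exact bounds_one
    | k + 2, ih => exact bounds_add_two fun j hj => ih j (by omega)

lemma vertical_bound_zero (n : ℕ) : ((n : ℚ) - 5 / 2) * N (n - 1) 0 ≤ N n 0 := by
  rcases Nat.lt_or_ge n 4 with hn | hn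
  · interval_cases n <;> norm_num [N, ddf]
  · rw [N_zero_eq_mul hn]
    have := (N_zero_pos (n - 1)).le
    have : (4 : ℚ) ≤ n := by exact_mod_cast hn
    nlinarith

lemma vertical_bound_one {n : ℕ} (hn : 3 ≤ n) : ((n : ℚ) - 3 / 2) * N (n - 1) 1 ≤ N n 1 := by
  rcases Nat.lt_or_ge n 4 with hn4 | hn4
  · obtain rfl : n = 3 := by omega
    norm_num [N, ddf]
  · rw [N_one, N_one, N_zero_eq_mul hn4, Nat.cast_sub (by omega : 1 ≤ n)]
    have : (4 : ℚ) ≤ n := by exact_mod_cast hn4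
    have hcoef : ((n : ℚ) - 3 / 2) * (n - 3) ≤ (n - 2) * (2 * n - 5) := by nlinarith
    push_cast
    nlinarith [mul_le_mul_of_nonneg_right hcoef (N_zero_pos (n - 1)).le]

theorem N_vertical_bound_general (n k : ℕ) (hk : k ≤ n - 2) :
    N n k ≥ ((n : ℚ) + k - 5 / 2) * N (n - 1) k := by
  rcases k with _ | _ | k
  · simpa using vertical_bound_zero n
  · have := vertical_bound_one (n := n) (by omega)
    push_cast; linarith
  · have := vertical_bound_add_two (fun j _ => bounds j) (n := n) (k := k) (by omega)
    push_cast; linarith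

/-- For `n ≥ 3` and `0 ≤ k ≤ n - 2`, `N(n,k) ≥ (n + k - 5/2) N(n-1,k)`. -/
theorem N_vertical_bound (n k : ℕ) (hn : 3 ≤ n) (hk : k ≤ n - 2) :
    N n k ≥ ((n : ℚ) + k - 5 / 2) * N (n - 1) k :=
  N_vertical_bound_general n k hk
end

section
/- For all integers n ≥ 2 and 0 ≤ k ≤ n, one has 1GN(n,k) ≤ C(n,k)·((n+k−2)!/(2n−2)!)·1GN(n,n). -/
/-- `oneGNk n k` is the number of one-component galled networks with `n` leaves and `k`
reticulation nodes: `1GN(n,k) = C(n,k) * N(n+1,k)`. -/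
def oneGNk (n k : ℕ) : ℚ := (n.choose k : ℚ) * N (n + 1) k

open Finset
open scoped Nat

lemma ddf_eq_doubleFactorial (n : ℕ) : ddf n = (n‼ : ℕ) := by
  induction n using ddf.induct with
  | case1 | case2 => simp [ddf]
  | case3 n ih => rw [ddf, ih, Nat.doubleFactorial_add_two]; push_cast; ring

lemma N_zero_nonneg (m : ℕ) : 0 ≤ N m 0 := by
  rw [N, ddf_eq_doubleFactorial]; positivity

lemma N_one_eq (m : ℕ) : N m 1 = (m - 2) * N m 0 := by
  rw [N, N]

lemma N_succ_zero {m : ℕ} (hm : 2 ≤ m) : N (m + 1) 0 = (2 * m - 3) * N m 0 := by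
  obtain ⟨q, rfl⟩ : ∃ q, m = q + 2 := ⟨m - 2, by omega⟩
  rcases q with _ | q
  · norm_num [N, ddf]
  · rw [N, N, show 2 * (q + 1 + 2 + 1) - 5 = 2 * q + 1 + 2 from by omega,
      show 2 * (q + 1 + 2) - 5 = 2 * q + 1 from by omega, ddf]
    push_cast; ring

-- At `d = 0` this is `0‼ = 1`, the convention `(-1)!! = 1`.
def weight (d : ℕ) : ℚ := ((2 * d - 1)‼ : ℕ)

@[simp] lemma weight_zero : weight 0 = 1 := by simp [weight]

lemma weight_nonneg (d : ℕ) : 0 ≤ weight d := by unfold weight; positivity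

lemma weight_succ (d : ℕ) : weight (d + 1) = (2 * d + 1) * weight d := by
  rcases d with _ | d
  · simp [weight]
  · rw [weight, weight, show 2 * (d + 1 + 1) - 1 = 2 * d + 1 + 2 from by omega,
      show 2 * (d + 1) - 1 = 2 * d + 1 from by omega, Nat.doubleFactorial_add_two]
    push_cast; ring

def diagTerm (K n d : ℕ) : ℚ := K.choose d * weight d * N (n - d) (K - d)

def diagSum (K n : ℕ) : ℚ := ∑ d ∈ range (K + 1), diagTerm K n d

lemma diagTerm_nonneg {K n d : ℕ} (h : 0 ≤ N (n - d) (K - d)) : 0 ≤ diagTerm K n d :=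
  mul_nonneg (mul_nonneg (Nat.cast_nonneg _) (weight_nonneg d)) h

lemma diagSum_eq_N_add_sum (K n : ℕ) :
    diagSum K n = N n K + ∑ i ∈ range K, diagTerm K n (i + 1) := by
  rw [diagSum, sum_range_succ', add_comm]; simp [diagTerm]

lemma diagSum_zero (n : ℕ) : diagSum 0 n = N n 0 := by simp [diagSum_eq_N_add_sum]

lemma two_mul_N_add_two {k n : ℕ} (h : k + 1 ≤ n) :
    2 * N n (k + 2) = 2 * (n + k - 1) * N n (k + 1) + 2 * (k + 1) * N n k
      + ∑ i ∈ range (k + 1),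
          (diagTerm (k + 1) n (i + 1) - diagTerm (k + 1) (n + 1) (i + 1)) := by
  have hterm : ∀ i ∈ range (k + 1),
      ((k + 1).choose (1 + i) : ℚ) * ddf (2 * (1 + i) - 1) *
        (N (n - (1 + i)) (k + 1 - (1 + i)) - N (n - (1 + i) + 1) (k + 1 - (1 + i)))
      = diagTerm (k + 1) n (i + 1) - diagTerm (k + 1) (n + 1) (i + 1) := by
    intro i hi
    have hi : i ≤ k := by simpa [Nat.lt_succ_iff] using hi
    rw [diagTerm, diagTerm, add_comm 1 i, show n - (i + 1) + 1 = n + 1 - (i + 1) by omega, weight,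
      ddf_eq_doubleFactorial]
    ring
  rw [N, ← Ico_add_one_right_eq_Icc, sum_Ico_eq_sum_range, Nat.add_sub_cancel,
    sum_congr rfl hterm]
  ring

lemma two_mul_N_succ_eq {J n : ℕ} (h : J ≤ n) :
    2 * N n (J + 1) = 2 * (n + J - 2) * N n J + 2 * J * N n (J - 1)
      + (diagSum J n - N n J) - (diagSum J (n + 1) - N (n + 1) J) := by
  rcases J with _ | k
  · rw [N_one_eq, diagSum_zero, diagSum_zero]; push_cast; ring
  · rw [diagSum_eq_N_add_sum, diagSum_eq_N_add_sum, two_mul_N_add_two h, sum_sub_distrib]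
    push_cast; ring

lemma two_mul_N_succ_of_diagSum_eq {J n : ℕ} (h : J ≤ n)
    (hS : diagSum J (n + 1) = (2 * n + 2 * J - 3) * N n J + 2 * J * N n (J - 1)) :
    2 * N n (J + 1) = N (n + 1) J - 2 * N n J + diagSum J n := by
  linear_combination two_mul_N_succ_eq h - hS

lemma diagSum_succ_succ_eq_sum (k n : ℕ) :
    diagSum (k + 1) (n + 1) = ∑ d ∈ range (k + 1),
      (k.choose d * weight d * N (n + 1 - d) (k - d + 1)
        + k.choose d * weight (d + 1) * N (n - d) (k - d)) := by
  have hpascal : ∀ i ∈ range (k + 1), diagTerm (k + 1) (n + 1) (i + 1)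
      = k.choose i * weight (i + 1) * N (n - i) (k - i)
        + k.choose (i + 1) * weight (i + 1) * N (n - i) (k - i) := by
    intro i _
    rw [diagTerm, Nat.choose_succ_succ, Nat.add_sub_add_right, Nat.add_sub_add_right]
    push_cast; ring
  have hshift : ∑ d ∈ range (k + 1), (k.choose d : ℚ) * weight d * N (n + 1 - d) (k - d + 1)
      = N (n + 1) (k + 1) + ∑ i ∈ range (k + 1),
          (k.choose (i + 1) : ℚ) * weight (i + 1) * N (n - i) (k - i) := by
    rw [sum_range_succ', sum_range_succ _ k, Nat.choose_succ_self]
    have hterm : ∀ i ∈ range k,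
        (k.choose (i + 1) : ℚ) * weight (i + 1) * N (n + 1 - (i + 1)) (k - (i + 1) + 1)
          = k.choose (i + 1) * weight (i + 1) * N (n - i) (k - i) := by
      intro i hi
      rw [Nat.add_sub_add_right, show k - (i + 1) + 1 = k - i by have := mem_range.1 hi; omega]
    rw [sum_congr rfl hterm]
    simp only [Nat.choose_zero_right, weight_zero, Nat.sub_zero]
    push_cast; ring
  rw [diagSum, sum_range_succ', sum_congr rfl hpascal, sum_add_distrib, sum_add_distrib, hshift]
  simp only [diagTerm, Nat.choose_zero_right, weight_zero, Nat.sub_zero]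
  push_cast; ring

lemma mul_diagSum_pred (k m : ℕ) :
    k * diagSum (k - 1) m
      = ∑ d ∈ range (k + 1), (k - d) * (k.choose d * weight d * N (m - d) (k - d - 1)) := by
  rcases k with _ | j
  · simp
  rw [sum_range_succ, Nat.add_sub_cancel, diagSum, mul_sum]
  simp only [Nat.cast_add, Nat.cast_one, sub_self, zero_mul, add_zero]
  refine sum_congr rfl fun d hd => ?_
  have hd : d ≤ j := Nat.lt_succ_iff.1 (mem_range.1 hd)
  have hchoose : ((j.choose d * (j + 1) : ℕ) : ℚ) = ((j + 1).choose d * (j + 1 - d) : ℕ) :=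
    congrArg _ (Nat.choose_mul_succ_eq j d)
  push_cast [show d ≤ j + 1 by omega] at hchoose
  rw [diagTerm, show j + 1 - d - 1 = j - d by omega]
  linear_combination weight d * N (m - d) (j - d) * hchoose

/-- `hN d` is the recurrence for `N (m + 1 - d) (k - d + 1)` once `diagSum` at level `k - d` has
been replaced by its closed form `diagSum_succ_eq`. -/
lemma two_mul_diagSum_succ_succ {k m : ℕ}
    (hN : ∀ d ≤ k, 2 * N (m + 1 - d) (k - d + 1) = -2 * N (m + 1 - d) (k - d)
      + (2 * m + 2 * k - 4 * d - 3) * N (m - d) (k - d)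
      + 2 * (k - d) * N (m - d) (k - d - 1) + N (m + 2 - d) (k - d)) :
    2 * diagSum (k + 1) (m + 1) = -2 * diagSum k (m + 1) + (2 * m + 2 * k - 1) * diagSum k m
      + 2 * (k * diagSum (k - 1) m) + diagSum k (m + 2) := by
  rw [diagSum_succ_succ_eq_sum, mul_diagSum_pred]
  simp only [diagSum, diagTerm, mul_sum, ← sum_add_distrib]
  refine sum_congr rfl fun d hd => ?_
  rw [weight_succ, show m + 2 - d = m + 1 + 1 - d by omega]
  linear_combination (k.choose d * weight d : ℚ) * hN d (Nat.lt_succ_iff.1 (mem_range.1 hd))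

theorem diagSum_succ_eq {K m : ℕ} (hKm : K + 1 ≤ m) (hm : 2 ≤ m) :
    diagSum K (m + 1) = (2 * m + 2 * K - 3) * N m K + 2 * K * N m (K - 1) := by
  induction K using Nat.strong_induction_on generalizing m with
  | _ K ih =>
  rcases K with _ | k
  · rw [diagSum_zero, N_succ_zero hm]; ring
  have hrec : ∀ j ≤ k, ∀ n, j + 1 ≤ n → 2 ≤ n →
      2 * N n (j + 1) = N (n + 1) j - 2 * N n j + diagSum j n := fun j hj n hjn hn =>
    two_mul_N_succ_of_diagSum_eq (by omega) (ih j (by omega) hjn hn)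
  have hN : ∀ d ≤ k, 2 * N (m + 1 - d) (k - d + 1) = -2 * N (m + 1 - d) (k - d)
      + (2 * m + 2 * k - 4 * d - 3) * N (m - d) (k - d)
      + 2 * (k - d) * N (m - d) (k - d - 1) + N (m + 2 - d) (k - d) := by
    intro d hd
    have h1 := hrec (k - d) (by omega) (m + 1 - d) (by omega) (by omega)
    have h2 := ih (k - d) (by omega) (show k - d + 1 ≤ m - d by omega) (by omega)
    rw [show m + 1 - d + 1 = m + 2 - d by omega, show m - d + 1 = m + 1 - d by omega] at *
    push_cast [show d ≤ k by omega, show d ≤ m by omega] at h1 h2 ⊢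
    linear_combination h1 + h2
  have hpred : (k : ℚ) * diagSum (k - 1) m
      = k * (2 * N m k - N (m + 1) (k - 1) + 2 * N m (k - 1)) := by
    rcases k with _ | j
    · simp
    · have := hrec j (by omega) m (by omega) hm
      rw [Nat.add_sub_cancel]
      push_cast
      linear_combination -(j + 1 : ℚ) * this
  have hk := ih k (by omega) (by omega) hm
  have hk' := ih k (by omega) (show k + 1 ≤ m + 1 by omega) (by omega)
  have hkm := hrec k le_rfl m (by omega) hm
  push_cast at hk' ⊢
  linear_combination (1 / 2 : ℚ) * two_mul_diagSum_succ_succ hN - hk + (1 / 2 : ℚ) * hk' + hpred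
    - ((2 * m + 2 * k - 1) / 2 : ℚ) * hkm

theorem sum_range_succ_le_two_mul {R : Type*} [CommRing R] [LinearOrder R] [IsStrictOrderedRing R]
    {f : ℕ → R} {n : ℕ} (hf : ∀ i < n, 2 * f (i + 1) ≤ f i) (hn : 0 ≤ f n) :
    ∑ i ∈ range (n + 1), f i ≤ 2 * f 0 := by
  suffices h : ∑ i ∈ range (n + 1), f i + f n ≤ 2 * f 0 by linarith
  clear hn
  induction n with
  | zero => rw [sum_range_one]; linarith
  | succ n ih =>
    have := hf n (by omega)
    have := ih fun i hi => hf i (by omega)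
    rw [sum_range_succ]
    linarith

lemma two_mul_diagTerm_succ_le {K m d : ℕ} (hm : K + 2 ≤ m) (hdK : d < K)
    (hpos : 0 ≤ N (m - d) (K - d - 1))
    (hdiag : (m + K - 2 * d - 2) * (2 * m + 2 * K - 4 * d - 5) * N (m - d) (K - d - 1)
      ≤ N (m + 1 - d) (K - d)) :
    2 * diagTerm K (m + 1) (d + 1) ≤ diagTerm K (m + 1) d := by
  set c : ℚ := (K.choose d : ℚ)
  set γ : ℚ := (K.choose (d + 1) : ℚ)
  have hγ : γ * (d + 1) = c * (K - d) := by
    have := congrArg (Nat.cast : ℕ → ℚ) (Nat.choose_succ_right_eq K d)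
    push_cast [hdK.le] at this
    exact this
  have hm' : (K : ℚ) + 2 ≤ m := by exact_mod_cast hm
  have hdK' : (d : ℚ) + 1 ≤ K := by exact_mod_cast hdK
  have hc : 0 ≤ c := Nat.cast_nonneg _
  have hcoeff : 2 * γ * (2 * d + 1)
      ≤ c * ((m + K - 2 * d - 2) * (2 * m + 2 * K - 4 * d - 5)) := by
    refine le_of_mul_le_mul_right ?_ (by positivity : (0 : ℚ) < d + 1)
    have hAB : 6 * ((K : ℚ) - d) ≤ (m + K - 2 * d - 2) * (2 * m + 2 * K - 4 * d - 5) := by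
      nlinarith
    calc 2 * γ * (2 * d + 1) * (d + 1) = c * (2 * (2 * d + 1) * (K - d)) := by
          linear_combination 2 * (2 * (d : ℚ) + 1) * hγ
      _ ≤ c * (6 * (K - d)) * (d + 1) := by
          rw [mul_assoc c]; exact mul_le_mul_of_nonneg_left (by nlinarith) hc
      _ ≤ _ := by gcongr
  have hw := weight_nonneg d
  rw [diagTerm, diagTerm, weight_succ, Nat.add_sub_add_right, Nat.sub_succ']
  calc 2 * (γ * ((2 * d + 1) * weight d) * N (m - d) (K - d - 1))
      = (2 * γ * (2 * d + 1)) * (weight d * N (m - d) (K - d - 1)) := by ring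
    _ ≤ (c * ((m + K - 2 * d - 2) * (2 * m + 2 * K - 4 * d - 5)))
          * (weight d * N (m - d) (K - d - 1)) := by gcongr
    _ = c * weight d
          * ((m + K - 2 * d - 2) * (2 * m + 2 * K - 4 * d - 5) * N (m - d) (K - d - 1)) := by
          ring
    _ ≤ c * weight d * N (m + 1 - d) (K - d) := by gcongr

lemma sum_diagTerm_le {K m : ℕ} (hm : K + 2 ≤ m)
    (hpos : ∀ j < K, ∀ q, j + 1 ≤ q → 0 ≤ N q j)
    (hdiag : ∀ j < K, ∀ q, j + 2 ≤ q →
      (q + j - 1) * (2 * q + 2 * j - 3) * N q j ≤ N (q + 1) (j + 1)) :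
    ∑ i ∈ range K, diagTerm K (m + 1) (i + 1) ≤ 2 * K * N m (K - 1) := by
  rcases K with _ | k
  · simp
  set f : ℕ → ℚ := fun i => diagTerm (k + 1) (m + 1) (i + 1)
  have hstep : ∀ i < k, 2 * f (i + 1) ≤ f i := by
    intro i hi
    have h := hdiag (k - i - 1) (by omega) (m - (i + 1)) (by omega)
    rw [show m - (i + 1) + 1 = m + 1 - (i + 1) by omega,
      show k - i - 1 + 1 = k + 1 - (i + 1) by omega] at h
    rw [Nat.sub_sub] at h
    refine two_mul_diagTerm_succ_le hm (by omega) (hpos _ (by omega) _ (by omega)) ?_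
    rw [show k + 1 - (i + 1) - 1 = k - (i + 1) by omega]
    push_cast [show i + 1 ≤ k by omega, show i + 1 ≤ m by omega] at h ⊢
    linear_combination h
  have hlast : 0 ≤ f k :=
    diagTerm_nonneg (by rw [Nat.sub_self]; exact hpos 0 (by omega) _ (by omega))
  refine (sum_range_succ_le_two_mul hstep hlast).trans_eq ?_
  simp [f, diagTerm, weight, mul_assoc]

lemma mul_N_le_N_succ_left_of_lower {K m : ℕ} (hm : K + 2 ≤ m)
    (hpos : ∀ j < K, ∀ q, j + 1 ≤ q → 0 ≤ N q j)
    (hdiag : ∀ j < K, ∀ q, j + 2 ≤ q →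
      (q + j - 1) * (2 * q + 2 * j - 3) * N q j ≤ N (q + 1) (j + 1)) :
    (2 * m + 2 * K - 3) * N m K ≤ N (m + 1) K := by
  have h := diagSum_succ_eq (show K + 1 ≤ m by omega) (by omega)
  rw [diagSum_eq_N_add_sum] at h
  linarith [sum_diagTerm_le hm hpos hdiag]

lemma mul_N_le_N_succ_right_of_lower {K m : ℕ} (hm : K + 2 ≤ m)
    (hpos : ∀ j < K, ∀ q, j + 1 ≤ q → 0 ≤ N q j)
    (hrow : (2 * m + 2 * K - 3) * N m K ≤ N (m + 1) K) :
    (m + K - 2) * N m K ≤ N m (K + 1) := by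
  have h := two_mul_N_succ_of_diagSum_eq (by omega)
    (diagSum_succ_eq (show K + 1 ≤ m by omega) (by omega))
  have htail : 0 ≤ ∑ i ∈ range K, diagTerm K m (i + 1) := sum_nonneg fun i hi => by
    have := mem_range.1 hi
    exact diagTerm_nonneg (hpos _ (by omega) _ (by omega))
  rw [diagSum_eq_N_add_sum] at h
  linarith

theorem N_nonneg_and_bounds (K : ℕ) :
    (∀ m, K + 1 ≤ m → 0 ≤ N m K) ∧
    (∀ m, K + 2 ≤ m → (2 * m + 2 * K - 3) * N m K ≤ N (m + 1) K) ∧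
    (∀ m, K + 2 ≤ m → (m + K - 2) * N m K ≤ N m (K + 1)) := by
  induction K using Nat.strong_induction_on with
  | _ K ih =>
  have hpos : ∀ j < K, ∀ q, j + 1 ≤ q → 0 ≤ N q j := fun j hj => (ih j hj).1
  have hdiag : ∀ j < K, ∀ q, j + 2 ≤ q →
      (q + j - 1) * (2 * q + 2 * j - 3) * N q j ≤ N (q + 1) (j + 1) := by
    intro j hj q hq
    have hrow := (ih j hj).2.1 q hq
    have hcol := (ih j hj).2.2 (q + 1) (by omega)
    have hqj : (0 : ℚ) ≤ q + j - 1 := by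
      have : (2 : ℚ) ≤ q + j := by exact_mod_cast (by omega : 2 ≤ q + j)
      linarith
    push_cast at hcol
    calc (q + j - 1) * (2 * q + 2 * j - 3) * N q j
        = (q + j - 1) * ((2 * q + 2 * j - 3) * N q j) := by ring
      _ ≤ (q + j - 1) * N (q + 1) j := mul_le_mul_of_nonneg_left hrow hqj
      _ ≤ N (q + 1) (j + 1) := by linarith
  have hrow : ∀ m, K + 2 ≤ m → (2 * m + 2 * K - 3) * N m K ≤ N (m + 1) K :=
    fun m hm => mul_N_le_N_succ_left_of_lower hm hpos hdiag
  refine ⟨fun m hm => ?_, hrow, fun m hm => mul_N_le_N_succ_right_of_lower hm hpos (hrow m hm)⟩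
  rcases K with _ | k
  · exact N_zero_nonneg m
  · have hcol := (ih k (by omega)).2.2 m (by omega)
    have hmk : (0 : ℚ) ≤ m + k - 2 := by
      have : (2 : ℚ) ≤ m + k := by exact_mod_cast (by omega : 2 ≤ m + k)
      linarith
    exact (mul_nonneg hmk (hpos k (by omega) m (by omega))).trans hcol

theorem mul_N_le_N_succ_right {K m : ℕ} (hm : K + 2 ≤ m) :
    (m + K - 2) * N m K ≤ N m (K + 1) :=
  (N_nonneg_and_bounds K).2.2 m hm

theorem N_mul_factorial_le {n k : ℕ} (hn : 2 ≤ n) (hk : k ≤ n) :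
    N (n + 1) k * (2 * n - 2)! ≤ (n + k - 2)! * N (n + 1) n := by
  induction hk using Nat.decreasingInduction with
  | self => rw [show n + n - 2 = 2 * n - 2 by omega, mul_comm]
  | of_succ k hk ih =>
    have hcol := mul_N_le_N_succ_right (K := k) (m := n + 1) (by omega)
    have hfac : ((n + (k + 1) - 2)! : ℚ) = (n + k - 1) * (n + k - 2)! := by
      rw [show n + (k + 1) - 2 = (n + k - 2) + 1 by omega, Nat.factorial_succ]
      push_cast [show 2 ≤ n + k by omega]
      ring
    rw [hfac] at ih
    push_cast at hcol
    have hpos : (0 : ℚ) < n + k - 1 := by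
      have : (2 : ℚ) ≤ n + k := by exact_mod_cast (by omega : 2 ≤ n + k)
      linarith
    refine le_of_mul_le_mul_left ?_ hpos
    calc (n + k - 1 : ℚ) * (N (n + 1) k * (2 * n - 2)!)
        = ((n + 1) + k - 2) * N (n + 1) k * (2 * n - 2)! := by ring
      _ ≤ N (n + 1) (k + 1) * (2 * n - 2)! := by gcongr
      _ ≤ _ := ih.trans_eq (by ring)

/-- For `n ≥ 2` and `0 ≤ k ≤ n`, `1GN(n,k) ≤ C(n,k) ((n+k-2)!/(2n-2)!) · 1GN(n,n)`. -/
theorem oneGNk_upper_bound (n k : ℕ) (hn : 2 ≤ n) (hk : k ≤ n) :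
    oneGNk n k ≤
      (n.choose k : ℚ) * (((n + k - 2).factorial : ℚ) / ((2 * n - 2).factorial : ℚ)) *
        oneGNk n n := by
  rw [oneGNk, oneGNk, Nat.choose_self, Nat.cast_one, one_mul, mul_assoc]
  gcongr
  rw [div_mul_eq_mul_div, le_div_iff₀ (by positivity)]
  exact N_mul_factorial_le hn hk
end

section
/- For all integers n ≥ 2 and 0 ≤ k ≤ n, one has C(n,k)·B(n+1,k) = ∑_{ℓ=0}^{k} C(n−ℓ,k−ℓ)·C(n,ℓ)·N(n+1,ℓ). (In the paper's terms: the number DU(n,k) of dup-trees with n distinct labels exactly k of which are repeated equals ∑_{ℓ=0}^{k} C(n−ℓ,k−ℓ)·1GN(n,ℓ), where 1GN(n,ℓ) counts twin-cherry-free dup-trees with n distinct labels exactly ℓ of which are repeated.) -/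
/-- `B n k` counts dup-trees, defined by the initial values `B(n,0) = (2n-5)!!`,
`B(n,1) = (n-1)(2n-5)!!` and the Gunawan--Rathin--Zhang recurrence for dup-trees. -/
def B : ℕ → ℕ → ℚ
  | n, 0 => ddf (2 * n - 5)
  | n, 1 => ((n : ℚ) - 1) * ddf (2 * n - 5)
  | n, k + 2 =>
      ((n : ℚ) + (k + 2) - 2) * B n (k + 1)
        + (1 / 2) * ∑ d ∈ Finset.Icc 1 (k + 1),
            (((k + 1).choose d : ℚ)) * ddf (2 * d - 1) *
              (B (n - d) (k + 1 - d) - B (n - d + 1) (k + 1 - d))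
  termination_by n k => k
  decreasing_by all_goals omega

open Finset

section BinomialTransform

variable {R : Type*} [CommRing R]

def binomialTransform (a : ℕ → R) (k : ℕ) : R :=
  ∑ ℓ ∈ range (k + 1), (k.choose ℓ : R) * a ℓ

theorem binomialTransform_succ (a : ℕ → R) (k : ℕ) :
    binomialTransform a (k + 1) =
      binomialTransform a k + binomialTransform (fun i => a (i + 1)) k := by
  have hlow : binomialTransform a k =
      ∑ i ∈ range (k + 1), (k.choose (i + 1) : R) * a (i + 1) + a 0 := by
    rw [binomialTransform, sum_range_succ', sum_range_succ _ k]
    simp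
  rw [binomialTransform, sum_range_succ', hlow, binomialTransform]
  simp only [Nat.choose_succ_succ, Nat.cast_add, add_mul, sum_add_distrib,
    Nat.choose_zero_right, Nat.cast_one, one_mul]
  ring

theorem sum_range_natCast_mul_choose_mul (x : ℕ → R) (k : ℕ) :
    ∑ i ∈ range (k + 2), (i : R) * ((k + 1).choose i : R) * x i =
      (k + 1) * binomialTransform (fun i => x (i + 1)) k := by
  rw [sum_range_succ', binomialTransform, mul_sum]
  simp only [Nat.cast_zero, zero_mul, add_zero]
  refine sum_congr rfl fun m _ => ?_
  have h : (((k + 1) * k.choose m : ℕ) : R) = ((k + 1).choose (m + 1) * (m + 1) : ℕ) := by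
    rw [Nat.add_one_mul_choose_eq]
  push_cast at h ⊢
  linear_combination (-x (m + 1)) * h

theorem binomialTransform_sub (a b : ℕ → R) (k : ℕ) :
    binomialTransform (fun i => a i - b i) k = binomialTransform a k - binomialTransform b k := by
  simp only [binomialTransform, mul_sub, sum_sub_distrib]

theorem binomialTransform_const_mul (c : R) (a : ℕ → R) (k : ℕ) :
    binomialTransform (fun i => c * a i) k = c * binomialTransform a k := by
  simp only [binomialTransform, mul_sum]
  exact sum_congr rfl fun _ _ => mul_left_comm _ _ _

theorem binomialTransform_sum_Icc_choose_mul (f : ℕ → ℕ → R) (k : ℕ) :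
    binomialTransform (fun i => ∑ d ∈ Icc 1 i, (i.choose d : R) * f d (i - d)) k =
      ∑ d ∈ Icc 1 k, (k.choose d : R) * binomialTransform (f d) (k - d) := by
  simp only [binomialTransform, mul_sum]
  rw [sum_comm' (t' := Icc 1 k) (s' := fun d => Ico d (k + 1))
    (fun i d => by simp only [mem_range, mem_Icc, mem_Ico]; omega)]
  refine sum_congr rfl fun d hd => ?_
  have hdk : d ≤ k := (mem_Icc.mp hd).2
  rw [sum_Ico_eq_sum_range, show k + 1 - d = k - d + 1 by omega]
  refine sum_congr rfl fun s _ => ?_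
  have hchoose : (k.choose (d + s) : R) * ((d + s).choose d : R) =
      (k.choose d : R) * ((k - d).choose s : R) := by
    have := Nat.choose_mul (n := k) (Nat.le_add_right d s)
    rw [Nat.add_sub_cancel_left] at this
    exact_mod_cast congrArg (Nat.cast : ℕ → R) this
  rw [Nat.add_sub_cancel_left]
  linear_combination f d s * hchoose

end BinomialTransform

theorem N_succ (n i : ℕ) :
    N n (i + 1) = ((n : ℚ) + i - 2) * N n i + (i : ℚ) * N n (i - 1)
      + (1 / 2) * ∑ d ∈ Icc 1 i,
          (i.choose d : ℚ) * ddf (2 * d - 1) * (N (n - d) (i - d) - N (n - d + 1) (i - d)) := by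
  match i with
  | 0 => simp [N]
  | m + 1 =>
    rw [N]
    push_cast
    ring_nf

theorem B_succ (n k : ℕ) :
    B n (k + 1) = ((n : ℚ) + k - 1) * B n k
      + (1 / 2) * ∑ d ∈ Icc 1 k,
          (k.choose d : ℚ) * ddf (2 * d - 1) * (B (n - d) (k - d) - B (n - d + 1) (k - d)) := by
  match k with
  | 0 => simp [B]
  | m + 1 =>
    rw [B]
    push_cast
    ring_nf

theorem binomialTransform_N_succ (n k : ℕ) :
    binomialTransform (N n) (k + 1) = ((n : ℚ) + k - 1) * binomialTransform (N n) k
      + (1 / 2) * ∑ d ∈ Icc 1 k, (k.choose d : ℚ) * ddf (2 * d - 1) *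
          (binomialTransform (N (n - d)) (k - d) - binomialTransform (N (n - d + 1)) (k - d)) := by
  rcases k with _ | k
  · simp [binomialTransform, N, sum_range_succ]
    ring
  have hexpand : binomialTransform (fun i => N n (i + 1)) (k + 1) =
      ((n : ℚ) - 2) * binomialTransform (N n) (k + 1)
        + ∑ i ∈ range (k + 2), (i : ℚ) * ((k + 1).choose i : ℚ) * N n i
        + ∑ i ∈ range (k + 2), (i : ℚ) * ((k + 1).choose i : ℚ) * N n (i - 1)
        + (1 / 2) * binomialTransform (fun i => ∑ d ∈ Icc 1 i, (i.choose d : ℚ) *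
            (ddf (2 * d - 1) * (N (n - d) (i - d) - N (n - d + 1) (i - d)))) (k + 1) := by
    simp only [binomialTransform, mul_sum (range (k + 2)), ← sum_add_distrib]
    refine sum_congr rfl fun i _ => ?_
    rw [N_succ]
    simp only [mul_assoc]
    ring
  have hconv := binomialTransform_sum_Icc_choose_mul
    (fun d s => ddf (2 * d - 1) * (N (n - d) s - N (n - d + 1) s)) (k + 1)
  simp only [binomialTransform_const_mul, binomialTransform_sub] at hconv
  rw [binomialTransform_succ, hexpand, sum_range_natCast_mul_choose_mul,
    sum_range_natCast_mul_choose_mul, hconv, binomialTransform_succ (N n) k]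
  simp only [Nat.add_sub_cancel, mul_assoc]
  push_cast
  ring

theorem B_eq_binomialTransform_N (n k : ℕ) : B n k = binomialTransform (N n) k := by
  induction k using Nat.strong_induction_on generalizing n with
  | _ k ih =>
    rcases k with _ | k
    · simp [B, N, binomialTransform]
    · rw [B_succ, binomialTransform_N_succ, ih k k.lt_succ_self]
      congr 2
      refine sum_congr rfl fun d _ => ?_
      rw [ih (k - d) (by omega), ih (k - d) (by omega)]

theorem DU_eq_sum_oneGN_general (n k : ℕ) :
    (n.choose k : ℚ) * B (n + 1) k =
      ∑ ℓ ∈ Finset.range (k + 1),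
        ((n - ℓ).choose (k - ℓ) : ℚ) * ((n.choose ℓ : ℚ) * N (n + 1) ℓ) := by
  rw [B_eq_binomialTransform_N, binomialTransform, mul_sum]
  refine sum_congr rfl fun ℓ hℓ => ?_
  have hchoose : (n.choose k : ℚ) * k.choose ℓ = n.choose ℓ * (n - ℓ).choose (k - ℓ) := by
    exact_mod_cast Nat.choose_mul (Nat.lt_succ_iff.mp (mem_range.mp hℓ))
  linear_combination N (n + 1) ℓ * hchoose

/-- `DU(n,k) = C(n,k) B(n+1,k)` equals `∑_{ℓ=0}^{k} C(n-ℓ,k-ℓ) · C(n,ℓ) N(n+1,ℓ)`: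
dup-trees with `n` distinct labels, `k` repeated, in terms of twin-cherry free dup-trees. -/
theorem DU_eq_sum_oneGN (n k : ℕ) (hn : 2 ≤ n) (hk : k ≤ n) :
    (n.choose k : ℚ) * B (n + 1) k =
      ∑ ℓ ∈ Finset.range (k + 1),
        ((n - ℓ).choose (k - ℓ) : ℚ) * ((n.choose ℓ : ℚ) * N (n + 1) ℓ) :=
  DU_eq_sum_oneGN_general n k
end

section
/- For each integer j ≥ 0, the series ∑_{m=0}^{∞} (m−j)·S(j, m−j) converges with sum e^{1/2}·(1/2 − j/3)·6^j; that is, ∑_{k≥−j} k·S(j,k) = e^{1/2}·(1/2 − j/3)·6^j. Consequently, for the joint limit law P(X=j, Y=k) = (e^{−7/8}/(16^j·j!))·S(j,k), the mean of Y equals E(Y) = ∑_{j≥0} ∑_{k≥−j} k·(e^{−7/8}/(16^j·j!))·S(j,k) = 3/8. -/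
/-- `cj j ℓ = [z^ℓ] (1 + 2z + 3z²)^j`. -/
noncomputable def cj (j ℓ : ℕ) : ℚ := (((1 + 2 * Polynomial.X + 3 * Polynomial.X ^ 2 : Polynomial ℚ)) ^ j).coeff ℓ

/-- `S j k = ∑_{ℓ = max(0, j-k)}^{2j} c_j(ℓ) / ((ℓ+k-j)! · 2^{ℓ+k-j})`, the coefficient of
`z^{j-k}` in the Laurent series `e^{1/(2z)} (1+2z+3z²)^j`. -/
noncomputable def S (j : ℕ) (k : ℤ) : ℝ :=
  ∑ ℓ ∈ Finset.range (2 * j + 1),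
    if 0 ≤ (ℓ : ℤ) + k - j then
      ((cj j ℓ : ℚ) : ℝ) /
        (((((ℓ : ℤ) + k - j).toNat).factorial : ℝ) * 2 ^ (((ℓ : ℤ) + k - j).toNat))
    else 0

/-!
Expanding `S j k` over `ℓ`, the series `∑ₖ k S(j,k)` becomes a finite combination of the series
`∑ₙ (n + a) (1/2)ⁿ / n! = (1/2 + a) e^{1/2}`, with weights `c_j(ℓ)`. Their total and first moment
are `P(1)^j = 6^j` and `(P^j)'(1) = j P'(1) P(1)^{j-1} = 8j 6^{j-1}` for `P = 1 + 2z + 3z²`,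
which gives the first sum. Weighting it by `e^{-7/8} / (16^j j!)` leaves
`e^{-3/8} ∑_j (1/2 - j/3) (3/8)^j / j!`, again an exponential series.
-/

open Polynomial Finset Nat

namespace Polynomial

variable {R : Type*} [Semiring R]

theorem sum_range_coeff_eq_eval_one {p : R[X]} {n : ℕ} (hn : p.natDegree < n) :
    ∑ i ∈ range n, p.coeff i = p.eval 1 := by
  simp [eval_eq_sum_range' hn]

theorem sum_range_mul_coeff_eq_derivative_eval_one {p : R[X]} {n : ℕ} (hn : p.natDegree < n) :
    ∑ i ∈ range n, (i : R) * p.coeff i = (derivative p).eval 1 := by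
  rw [derivative_eval, sum_over_range' _ (by simp) n hn]
  simp only [one_pow, mul_one]
  exact sum_congr rfl fun i _ => (Nat.cast_commute i _).eq

end Polynomial

noncomputable def cjPoly : ℚ[X] := 1 + 2 * X + 3 * X ^ 2

theorem natDegree_cjPoly_pow (j : ℕ) : (cjPoly ^ j).natDegree = 2 * j := by
  have : cjPoly.natDegree = 2 := by unfold cjPoly; compute_degree!
  rw [natDegree_pow, this, mul_comm]

theorem eval_one_cjPoly : cjPoly.eval 1 = 6 := by norm_num [cjPoly]

theorem eval_one_derivative_cjPoly : (derivative cjPoly).eval 1 = 8 := by norm_num [cjPoly]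

theorem sum_cj (j : ℕ) : ∑ ℓ ∈ range (2 * j + 1), (cj j ℓ : ℝ) = 6 ^ j := by
  have hdeg : (cjPoly ^ j).natDegree < 2 * j + 1 := by rw [natDegree_cjPoly_pow]; omega
  have h : ∑ ℓ ∈ range (2 * j + 1), cj j ℓ = 6 ^ j := by
    refine (sum_range_coeff_eq_eval_one hdeg).trans ?_
    rw [eval_pow, eval_one_cjPoly]
  exact_mod_cast h

theorem sum_mul_cj (j : ℕ) :
    ∑ ℓ ∈ range (2 * j + 1), (ℓ : ℝ) * cj j ℓ = 4 * j / 3 * 6 ^ j := by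
  have hdeg : (cjPoly ^ j).natDegree < 2 * j + 1 := by rw [natDegree_cjPoly_pow]; omega
  have h : ∑ ℓ ∈ range (2 * j + 1), (ℓ : ℚ) * cj j ℓ = j * 6 ^ (j - 1) * 8 := by
    refine (sum_range_mul_coeff_eq_derivative_eval_one hdeg).trans ?_
    simp [derivative_pow, eval_one_cjPoly, eval_one_derivative_cjPoly]
  have h' := congrArg (Rat.cast : ℚ → ℝ) h
  push_cast at h'
  rw [h']
  rcases j with _ | j
  · simp
  · rw [Nat.add_sub_cancel, pow_succ]
    push_cast
    ring

theorem Real.hasSum_pow_div_factorial (x : ℝ) :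
    HasSum (fun n : ℕ => x ^ n / n !) (Real.exp x) := by
  rw [Real.exp_eq_exp_ℝ]
  exact NormedSpace.expSeries_div_hasSum_exp x

theorem Real.hasSum_add_mul_pow_div_factorial (x a : ℝ) :
    HasSum (fun n : ℕ => (n + a) * (x ^ n / n !)) ((x + a) * Real.exp x) := by
  have hmul : HasSum (fun n : ℕ => n * (x ^ n / n !)) (x * Real.exp x) := by
    rw [← hasSum_nat_add_iff' 1]
    simp only [range_one, sum_singleton, CharP.cast_eq_zero, zero_mul, sub_zero]
    refine ((Real.hasSum_pow_div_factorial x).mul_left x).congr_fun fun n => ?_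
    rw [Nat.factorial_succ]
    push_cast
    field_simp
    ring
  simpa [add_mul] using hmul.add ((Real.hasSum_pow_div_factorial x).mul_left a)

/-- `expHalfCoeff n = [wⁿ] e^{w/2}`, extended by zero to negative `n`. -/
noncomputable def expHalfCoeff (n : ℤ) : ℝ :=
  if 0 ≤ n then 1 / (n.toNat ! * 2 ^ n.toNat) else 0

theorem expHalfCoeff_natCast (n : ℕ) : expHalfCoeff n = (1 / 2) ^ n / n ! := by
  simp [expHalfCoeff, div_eq_mul_inv, mul_comm]

theorem S_eq_sum_cj_mul_expHalfCoeff (j : ℕ) (k : ℤ) :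
    S j k = ∑ ℓ ∈ range (2 * j + 1), (cj j ℓ : ℝ) * expHalfCoeff (ℓ + k - j) := by
  refine sum_congr rfl fun ℓ _ => ?_
  unfold expHalfCoeff
  split_ifs <;> simp [div_eq_mul_inv]

theorem hasSum_sub_mul_expHalfCoeff_sub (a : ℝ) (d : ℕ) :
    HasSum (fun m : ℕ => ((m : ℝ) - a) * expHalfCoeff ((m : ℤ) - d))
      ((1 / 2 + d - a) * Real.exp (1 / 2)) := by
  have hvanish : ∀ m ∈ range d, ((m : ℝ) - a) * expHalfCoeff ((m : ℤ) - d) = 0 := by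
    intro m hm
    rw [mem_range] at hm
    rw [expHalfCoeff, if_neg (by omega), mul_zero]
  rw [← hasSum_nat_add_iff' d, sum_eq_zero hvanish, sub_zero,
    show (1 / 2 + d - a : ℝ) = 1 / 2 + (d - a) by ring]
  refine (Real.hasSum_add_mul_pow_div_factorial (1 / 2) (d - a)).congr_fun fun n => ?_
  rw [show ((n + d : ℕ) : ℤ) - d = n by push_cast; ring, expHalfCoeff_natCast]
  push_cast
  ring

theorem hasSum_sub_mul_S (j : ℕ) :
    HasSum (fun m : ℕ => ((m : ℝ) - j) * S j ((m : ℤ) - j))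
      (Real.exp (1 / 2) * (1 / 2 - (j : ℝ) / 3) * 6 ^ j) := by
  have hterm : ∀ ℓ ∈ range (2 * j + 1),
      HasSum (fun m : ℕ => (cj j ℓ : ℝ) * (((m : ℝ) - j) * expHalfCoeff (ℓ + ((m : ℤ) - j) - j)))
        ((cj j ℓ : ℝ) * ((1 / 2 + j - ℓ) * Real.exp (1 / 2))) := by
    intro ℓ hℓ
    have hℓ : ℓ ≤ 2 * j := by rw [mem_range] at hℓ; omega
    have h := (hasSum_sub_mul_expHalfCoeff_sub j (2 * j - ℓ)).mul_left (cj j ℓ : ℝ)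
    rw [show (1 / 2 + ((2 * j - ℓ : ℕ) : ℝ) - j) = 1 / 2 + j - ℓ by push_cast [hℓ]; ring] at h
    refine h.congr_fun fun m => ?_
    rw [show (ℓ : ℤ) + ((m : ℤ) - j) - j = m - ((2 * j - ℓ : ℕ) : ℤ) by omega]
  have hvalue : ∑ ℓ ∈ range (2 * j + 1), (cj j ℓ : ℝ) * ((1 / 2 + j - ℓ) * Real.exp (1 / 2)) =
      Real.exp (1 / 2) * (1 / 2 - (j : ℝ) / 3) * 6 ^ j := by
    have hsplit : ∑ ℓ ∈ range (2 * j + 1), (cj j ℓ : ℝ) * ((1 / 2 + j - ℓ) * Real.exp (1 / 2)) =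
        Real.exp (1 / 2) * ((1 / 2 + j) * ∑ ℓ ∈ range (2 * j + 1), (cj j ℓ : ℝ)
          - ∑ ℓ ∈ range (2 * j + 1), (ℓ : ℝ) * cj j ℓ) := by
      rw [mul_sum, ← sum_sub_distrib, mul_sum]
      exact sum_congr rfl fun ℓ _ => by ring
    rw [hsplit, sum_cj, sum_mul_cj]
    ring
  have h := hasSum_sum hterm
  rw [hvalue] at h
  refine h.congr_fun fun m => ?_
  rw [S_eq_sum_cj_mul_expHalfCoeff, mul_sum]
  exact sum_congr rfl fun ℓ _ => by ring

theorem hasSum_weighted_row_sums :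
    HasSum (fun j : ℕ => Real.exp (-(7 / 8)) / (16 ^ j * j !) *
      (Real.exp (1 / 2) * (1 / 2 - (j : ℝ) / 3) * 6 ^ j)) (3 / 8) := by
  have hexp : Real.exp (-(7 / 8)) * Real.exp (1 / 2) = Real.exp (-(3 / 8)) := by
    rw [← Real.exp_add]; norm_num
  have hexp' : Real.exp (-(3 / 8)) * Real.exp (3 / 8) = 1 := by
    rw [← Real.exp_add]; norm_num
  have h := (Real.hasSum_add_mul_pow_div_factorial (3 / 8) (-(3 / 2))).mul_left
    (-(1 / 3) * Real.exp (-(3 / 8)))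
  rw [show -(1 / 3) * Real.exp (-(3 / 8)) * ((3 / 8 + -(3 / 2)) * Real.exp (3 / 8)) = 3 / 8 by
    linear_combination (3 / 8) * hexp'] at h
  refine h.congr_fun fun j => ?_
  rw [← hexp, show ((3 : ℝ) / 8) ^ j = 6 ^ j / 16 ^ j by rw [← div_pow]; norm_num]
  field_simp
  ring

/-- For each `j ≥ 0`, `∑_{k ≥ -j} k · S(j,k) = e^{1/2}(1/2 - j/3) 6^j`; consequently, for the
joint limit law `P(X = j, Y = k) = (e^{-7/8}/(16^j j!)) S(j,k)`, the mean of `Y` is `3/8`. -/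
theorem S_weighted_sum :
    (∀ j : ℕ, HasSum (fun m : ℕ => ((m : ℝ) - j) * S j ((m : ℤ) - j))
        (Real.exp (1 / 2) * (1 / 2 - (j : ℝ) / 3) * 6 ^ j)) ∧
    HasSum (fun j : ℕ => ∑' m : ℕ, ((m : ℝ) - j) *
        (Real.exp (-(7 / 8)) / (16 ^ j * (j.factorial : ℝ)) * S j ((m : ℤ) - j)))
      (3 / 8) := by
  refine ⟨hasSum_sub_mul_S, hasSum_weighted_row_sums.congr_fun fun j => ?_⟩
  rw [← ((hasSum_sub_mul_S j).mul_left _).tsum_eq]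
  exact tsum_congr fun m => by ring
end
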